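/- Let I ⊆ ℝ be an interval, φ : I → ℝ be C² with φ > 0 and φ' > 0 on I, let Ω ⊆ ℝⁿ be open, Q_T = Ω × (0,T], and let v, h ∈ C^{2,1}(Q_T) with h > 0 and v taking values in I. Set u := h·φ(v). Let V be continuous on Q_T and q ∈ ℝ \ {0}. If ∂_t u − Δu + V·u^q ≥ ∂_t h − Δh in Q_T, then ∂_t(hv) − Δ(hv) + h^q·V·φ(v)^q/φ'(v) ≥ (v − (φ(v) − 1)/φ'(v))·(∂_t h − Δh) + (φ''(v)/φ'(v))·|∇v|²·h in Q_T. -/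

import Mathlib

/-!
Write `P w = ∂ₜw − Δw`. The product and chain rules give `P(fg) = P(f) g + f P(g) − 2∇f·∇g` and
`P(φ(v)) = φ'(v) P(v) − φ''(v)|∇v|²`, so the terms `h P(v)` and `∇h·∇v` cancel in
`φ'(v) P(hv) − P(hφ(v)) = (φ'(v) v − φ(v)) P(h) + φ''(v)|∇v|² h`.
Substituting the hypothesis `P(hφ(v)) ≥ P(h) − V (hφ(v))^q` and dividing by `φ'(v) > 0` gives the claim.
-/

open Set

noncomputable def lap {n : ℕ} (f : EuclideanSpace ℝ (Fin n) → ℝ)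
    (x : EuclideanSpace ℝ (Fin n)) : ℝ :=
  ∑ i, fderiv ℝ (fun y => fderiv ℝ f y (EuclideanSpace.single i 1)) x
      (EuclideanSpace.single i 1)

noncomputable def gradInner {n : ℕ} (f g : EuclideanSpace ℝ (Fin n) → ℝ)
    (x : EuclideanSpace ℝ (Fin n)) : ℝ :=
  ∑ i, fderiv ℝ f x (EuclideanSpace.single i 1) * fderiv ℝ g x (EuclideanSpace.single i 1)

noncomputable def timeDeriv {n : ℕ} (u : EuclideanSpace ℝ (Fin n) → ℝ → ℝ)
    (x : EuclideanSpace ℝ (Fin n)) (t : ℝ) : ℝ :=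
  deriv (u x) t

noncomputable def lapSpace {n : ℕ} (u : EuclideanSpace ℝ (Fin n) → ℝ → ℝ)
    (x : EuclideanSpace ℝ (Fin n)) (t : ℝ) : ℝ :=
  lap (fun y => u y t) x

section SecondDirectionalDerivative

variable {E : Type*} [NormedAddCommGroup E] [NormedSpace ℝ E] {f g : E → ℝ} {x : E}

lemma fderiv_comp_real_apply {φ : ℝ → ℝ} (hφ : DifferentiableAt ℝ φ (g x))
    (hg : DifferentiableAt ℝ g x) (w : E) :
    fderiv ℝ (fun z => φ (g z)) x w = deriv φ (g x) * fderiv ℝ g x w :=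
  congrArg (· w) (hφ.hasDerivAt.comp_hasFDerivAt x hg.hasFDerivAt).fderiv

lemma ContDiffAt.differentiableAt_fderiv_apply (hf : ContDiffAt ℝ 2 f x) (w : E) :
    DifferentiableAt ℝ (fun y => fderiv ℝ f y w) x :=
  ((hf.fderiv_right (m := 1) le_rfl).differentiableAt one_ne_zero).clm_apply
    (differentiableAt_const w)

lemma fderiv_fderiv_mul_apply (hf : ContDiffAt ℝ 2 f x) (hg : ContDiffAt ℝ 2 g x) (w : E) :
    fderiv ℝ (fun y => fderiv ℝ (fun z => f z * g z) y w) x w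
      = fderiv ℝ (fun y => fderiv ℝ f y w) x w * g x
        + 2 * (fderiv ℝ f x w * fderiv ℝ g x w)
        + f x * fderiv ℝ (fun y => fderiv ℝ g y w) x w := by
  have hfirst : (fun y => fderiv ℝ (fun z => f z * g z) y w)
      =ᶠ[nhds x] fun y => fderiv ℝ f y w * g y + f y * fderiv ℝ g y w := by
    filter_upwards [hf.eventually (by simp), hg.eventually (by simp)] with y hfy hgy
    rw [fderiv_fun_mul (hfy.differentiableAt two_ne_zero) (hgy.differentiableAt two_ne_zero)]
    simp only [add_apply, smul_apply, smul_eq_mul]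
    ring
  have df := hf.differentiableAt two_ne_zero
  have dg := hg.differentiableAt two_ne_zero
  have dfw := hf.differentiableAt_fderiv_apply w
  have dgw := hg.differentiableAt_fderiv_apply w
  rw [hfirst.fderiv_eq, fderiv_fun_add (by fun_prop) (by fun_prop), add_apply,
    fderiv_fun_mul dfw dg, fderiv_fun_mul df dgw]
  simp only [add_apply, smul_apply, smul_eq_mul]
  ring

lemma fderiv_fderiv_comp_apply {φ : ℝ → ℝ} (hφ : ContDiffAt ℝ 2 φ (g x))
    (hg : ContDiffAt ℝ 2 g x) (w : E) :
    fderiv ℝ (fun y => fderiv ℝ (fun z => φ (g z)) y w) x w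
      = deriv (deriv φ) (g x) * (fderiv ℝ g x w * fderiv ℝ g x w)
        + deriv φ (g x) * fderiv ℝ (fun y => fderiv ℝ g y w) x w := by
  have dg := hg.differentiableAt two_ne_zero
  have hfirst : (fun y => fderiv ℝ (fun z => φ (g z)) y w)
      =ᶠ[nhds x] fun y => deriv φ (g y) * fderiv ℝ g y w := by
    filter_upwards [dg.continuousAt.eventually (hφ.eventually (by simp)),
      hg.eventually (by simp)] with y hφy hgy
    exact fderiv_comp_real_apply (hφy.differentiableAt two_ne_zero)
      (hgy.differentiableAt two_ne_zero) w
  -- `deriv φ` is `fun s => fderiv ℝ φ s 1`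
  have dφ' : DifferentiableAt ℝ (deriv φ) (g x) := hφ.differentiableAt_fderiv_apply 1
  rw [hfirst.fderiv_eq, fderiv_fun_mul (by fun_prop) (hg.differentiableAt_fderiv_apply w)]
  simp only [add_apply, smul_apply, smul_eq_mul]
  rw [fderiv_comp_real_apply dφ' dg w]
  ring

end SecondDirectionalDerivative

section Laplacian

variable {n : ℕ} {f g : EuclideanSpace ℝ (Fin n) → ℝ} {x : EuclideanSpace ℝ (Fin n)}

lemma lap_mul (hf : ContDiffAt ℝ 2 f x) (hg : ContDiffAt ℝ 2 g x) :
    lap (fun z => f z * g z) x = lap f x * g x + 2 * gradInner f g x + f x * lap g x := by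
  simp only [lap, gradInner, Finset.sum_mul, Finset.mul_sum, ← Finset.sum_add_distrib,
    fderiv_fderiv_mul_apply hf hg]

lemma lap_comp {φ : ℝ → ℝ} (hφ : ContDiffAt ℝ 2 φ (g x)) (hg : ContDiffAt ℝ 2 g x) :
    lap (fun z => φ (g z)) x
      = deriv (deriv φ) (g x) * gradInner g g x + deriv φ (g x) * lap g x := by
  simp only [lap, gradInner, Finset.mul_sum, ← Finset.sum_add_distrib,
    fderiv_fderiv_comp_apply hφ hg]

lemma gradInner_comp_right {φ : ℝ → ℝ} (hφ : DifferentiableAt ℝ φ (g x))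
    (hg : DifferentiableAt ℝ g x) :
    gradInner f (fun z => φ (g z)) x = deriv φ (g x) * gradInner f g x := by
  simp only [gradInner, Finset.mul_sum, fderiv_comp_real_apply hφ hg]
  exact Finset.sum_congr rfl fun _ _ => by ring

end Laplacian

noncomputable def heatOp {n : ℕ} (u : EuclideanSpace ℝ (Fin n) → ℝ → ℝ)
    (x : EuclideanSpace ℝ (Fin n)) (t : ℝ) : ℝ :=
  timeDeriv u x t - lapSpace u x t

section HeatOperator

variable {n : ℕ} {f g : EuclideanSpace ℝ (Fin n) → ℝ → ℝ} {x : EuclideanSpace ℝ (Fin n)} {t : ℝ}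

lemma heatOp_mul (hf : ContDiffAt ℝ 2 (fun y => f y t) x) (hg : ContDiffAt ℝ 2 (fun y => g y t) x)
    (hft : DifferentiableAt ℝ (f x) t) (hgt : DifferentiableAt ℝ (g x) t) :
    heatOp (fun y s => f y s * g y s) x t
      = heatOp f x t * g x t + f x t * heatOp g x t
        - 2 * gradInner (fun y => f y t) (fun y => g y t) x := by
  simp only [heatOp, timeDeriv, lapSpace]
  rw [deriv_fun_mul hft hgt, lap_mul hf hg]
  ring

lemma heatOp_comp {φ : ℝ → ℝ} (hφ : ContDiffAt ℝ 2 φ (g x t))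
    (hg : ContDiffAt ℝ 2 (fun y => g y t) x) (hgt : DifferentiableAt ℝ (g x) t) :
    heatOp (fun y s => φ (g y s)) x t
      = deriv φ (g x t) * heatOp g x t
        - deriv (deriv φ) (g x t) * gradInner (fun y => g y t) (fun y => g y t) x := by
  simp only [heatOp, timeDeriv, lapSpace]
  rw [show deriv (fun s => φ (g x s)) t = _ from deriv_comp t (hφ.differentiableAt two_ne_zero) hgt,
    lap_comp hφ hg]
  ring

end HeatOperator

theorem lemma42_ge_general {n : ℕ} (T : ℝ)
    (Ω : Set (EuclideanSpace ℝ (Fin n)))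
    (I : Set ℝ) (hIopen : IsOpen I)
    (φ : ℝ → ℝ) (hφ : ContDiffOn ℝ 2 φ I)
    (hφpos : ∀ s ∈ I, 0 < φ s) (hφ'pos : ∀ s ∈ I, 0 < deriv φ s)
    (v h : EuclideanSpace ℝ (Fin n) → ℝ → ℝ)
    (hvx : ∀ x ∈ Ω, ∀ t ∈ Ioc (0:ℝ) T, ContDiffAt ℝ 2 (fun y => v y t) x)
    (hhx : ∀ x ∈ Ω, ∀ t ∈ Ioc (0:ℝ) T, ContDiffAt ℝ 2 (fun y => h y t) x)
    (hvt : ∀ x ∈ Ω, ∀ t ∈ Ioc (0:ℝ) T, DifferentiableAt ℝ (v x) t)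
    (hht : ∀ x ∈ Ω, ∀ t ∈ Ioc (0:ℝ) T, DifferentiableAt ℝ (h x) t)
    (hvI : ∀ x ∈ Ω, ∀ t ∈ Ioc (0:ℝ) T, v x t ∈ I)
    (hhpos : ∀ x ∈ Ω, ∀ t ∈ Ioc (0:ℝ) T, 0 < h x t)
    (V : EuclideanSpace ℝ (Fin n) → ℝ → ℝ)
    (q : ℝ)
    (u : EuclideanSpace ℝ (Fin n) → ℝ → ℝ)
    (hu : u = fun y s => h y s * φ (v y s))
    (hineq : ∀ x ∈ Ω, ∀ t ∈ Ioc (0:ℝ) T,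
      timeDeriv u x t - lapSpace u x t + V x t * u x t ^ q
        ≥ timeDeriv h x t - lapSpace h x t) :
    ∀ x ∈ Ω, ∀ t ∈ Ioc (0:ℝ) T,
      timeDeriv (fun y s => h y s * v y s) x t
          - lapSpace (fun y s => h y s * v y s) x t
          + h x t ^ q * V x t * φ (v x t) ^ q / deriv φ (v x t)
        ≥ (v x t - (φ (v x t) - 1) / deriv φ (v x t)) *
            (timeDeriv h x t - lapSpace h x t)
          + deriv (deriv φ) (v x t) / deriv φ (v x t) *
              (gradInner (fun y => v y t) (fun y => v y t) x) * h x t := by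
  intro x hx t ht
  subst hu
  have hv := hvx x hx t ht
  have hh := hhx x hx t ht
  have hvI' := hvI x hx t ht
  have hφv : ContDiffAt ℝ 2 φ (v x t) := hφ.contDiffAt (hIopen.mem_nhds hvI')
  have hsupersol : heatOp (fun y s => h y s * φ (v y s)) x t
      + V x t * (h x t ^ q * φ (v x t) ^ q) ≥ heatOp h x t := by
    rw [← Real.mul_rpow (hhpos x hx t ht).le (hφpos _ hvI').le]
    exact hineq x hx t ht
  rw [heatOp_mul hh (hφv.comp (f := fun y => v y t) x hv) (hht x hx t ht)
      ((hφv.differentiableAt two_ne_zero).comp t (hvt x hx t ht)),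
    heatOp_comp hφv hv (hvt x hx t ht),
    gradInner_comp_right (hφv.differentiableAt two_ne_zero) (hv.differentiableAt two_ne_zero)]
    at hsupersol
  change heatOp (fun y s => h y s * v y s) x t + _ ≥ _ * heatOp h x t + _
  rw [heatOp_mul hh hv (hht x hx t ht) (hvt x hx t ht)]
  have := hφ'pos _ hvI'
  field_simp
  linarith [hsupersol]

/-- Lemma 4.2 (first part, Euclidean case): if `u = h·φ(v)` satisfies
`∂ₜu − Δu + V u^q ≥ ∂ₜh − Δh` in `Q_T`, then
`∂ₜ(hv) − Δ(hv) + h^q V φ(v)^q/φ'(v) ≥ (v − (φ(v)−1)/φ'(v))(∂ₜh − Δh) + (φ''(v)/φ'(v))|∇v|² h`. -/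
theorem lemma42_ge {n : ℕ} (T : ℝ)
    (Ω : Set (EuclideanSpace ℝ (Fin n))) (hΩ : IsOpen Ω)
    (I : Set ℝ) (hIopen : IsOpen I) (hIconn : I.OrdConnected)
    (φ : ℝ → ℝ) (hφ : ContDiffOn ℝ 2 φ I)
    (hφpos : ∀ s ∈ I, 0 < φ s) (hφ'pos : ∀ s ∈ I, 0 < deriv φ s)
    (v h : EuclideanSpace ℝ (Fin n) → ℝ → ℝ)
    (hvx : ∀ x ∈ Ω, ∀ t ∈ Ioc (0:ℝ) T, ContDiffAt ℝ 2 (fun y => v y t) x)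
    (hhx : ∀ x ∈ Ω, ∀ t ∈ Ioc (0:ℝ) T, ContDiffAt ℝ 2 (fun y => h y t) x)
    (hvt : ∀ x ∈ Ω, ∀ t ∈ Ioc (0:ℝ) T, DifferentiableAt ℝ (v x) t)
    (hht : ∀ x ∈ Ω, ∀ t ∈ Ioc (0:ℝ) T, DifferentiableAt ℝ (h x) t)
    (hvI : ∀ x ∈ Ω, ∀ t ∈ Ioc (0:ℝ) T, v x t ∈ I)
    (hhpos : ∀ x ∈ Ω, ∀ t ∈ Ioc (0:ℝ) T, 0 < h x t)
    (V : EuclideanSpace ℝ (Fin n) → ℝ → ℝ)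
    (hV : ContinuousOn (fun p : EuclideanSpace ℝ (Fin n) × ℝ => V p.1 p.2) (Ω ×ˢ Ioc 0 T))
    (q : ℝ) (hq : q ≠ 0)
    (u : EuclideanSpace ℝ (Fin n) → ℝ → ℝ)
    (hu : u = fun y s => h y s * φ (v y s))
    (hineq : ∀ x ∈ Ω, ∀ t ∈ Ioc (0:ℝ) T,
      timeDeriv u x t - lapSpace u x t + V x t * u x t ^ q
        ≥ timeDeriv h x t - lapSpace h x t) :
    ∀ x ∈ Ω, ∀ t ∈ Ioc (0:ℝ) T,
      timeDeriv (fun y s => h y s * v y s) x t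
          - lapSpace (fun y s => h y s * v y s) x t
          + h x t ^ q * V x t * φ (v x t) ^ q / deriv φ (v x t)
        ≥ (v x t - (φ (v x t) - 1) / deriv φ (v x t)) *
            (timeDeriv h x t - lapSpace h x t)
          + deriv (deriv φ) (v x t) / deriv φ (v x t) *
              (gradInner (fun y => v y t) (fun y => v y t) x) * h x t :=
  lemma42_ge_general T Ω I hIopen φ hφ hφpos hφ'pos v h hvx hhx hvt hht hvI hhpos V q u hu hineq
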